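/- arXiv:2307.02627 — 2 statements merged into one kernel-verified Lean document; each statement's English description precedes it below -/
import Mathlib

section
/- Let |A| = 3 and suppose the proxy mechanism g satisfies Preference Monotonicity and Independence of Irrelevant Proxies, with |N| ≥ 3. Then there exist a voter i, alternatives a, b, c, partial orders P_i, P'_i with either P'_i = P_i ∪ {a ≻ b} or P'_i = P_i \ {b ≻ a}, a profile P_{-i} of the other voters, a proxy choice profile S, and a default vote profile D, such that the vote cast by i's guru is the linear order b ≻ a ≻ c under (P_i, P_{-i}) and c ≻ a ≻ b under (P'_i, P_{-i}). -/
open scoped Classical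

/-- A partial preference: an irreflexive, antisymmetric, transitive relation on `A`,
identified with its set of strict pairwise comparisons (edges). -/
structure PPref (A : Type*) where
  rel : A → A → Prop
  irrefl : ∀ a, ¬ rel a a
  antisymm : ∀ a b, rel a b → ¬ rel b a
  trans : ∀ a b c, rel a b → rel b c → rel a c

namespace PPref

variable {A : Type*}

/-- `P ⊆ Q` as sets of edges. -/
def subsetOf (P Q : PPref A) : Prop := ∀ a b, P.rel a b → Q.rel a b

/-- The empty partial preference (no edges). -/
def isEmptyPref (P : PPref A) : Prop := ∀ a b, ¬ P.rel a b

/-- A linear (complete) preference. -/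
def isLinear (P : PPref A) : Prop := ∀ a b, a ≠ b → P.rel a b ∨ P.rel b a

/-- Relabelling alternatives by a permutation `ψ`. -/
def map (ψ : Equiv.Perm A) (P : PPref A) : PPref A where
  rel a b := P.rel (ψ.symm a) (ψ.symm b)
  irrefl a h := P.irrefl _ h
  antisymm a b h h' := P.antisymm _ _ h h'
  trans a b c h h' := P.trans _ _ _ h h'

end PPref

/-- Linear orders over `A`. -/
def LPref (A : Type*) := {P : PPref A // P.isLinear}

/-- Relabelling alternatives of a linear order. -/
def LPref.map {A : Type*} (ψ : Equiv.Perm A) (L : LPref A) : LPref A :=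
  ⟨PPref.map ψ L.1, fun a b hab => L.2 _ _ fun h => hab (ψ.symm.injective h)⟩

section Defs

variable {N : Type*} {A : Type*}

/-- The defining axioms of a proxy mechanism. -/
def IsProxyMech (g : (N → PPref A) → N → Set N) : Prop :=
  (∀ (P : N → PPref A) (i : N), (P i).isEmptyPref → g P i = {j | j ≠ i}) ∧
  (∀ (P : N → PPref A) (i : N), (P i).isLinear → g P i = {i}) ∧
  (∀ (P : N → PPref A) (i : N), ¬ (P i).isLinear → i ∉ g P i)

/-- Edges on which `P` and `Q` agree. -/
def Agree (P Q : PPref A) : Set (A × A) := {p | P.rel p.1 p.2 ∧ Q.rel p.1 p.2}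

/-- Edges of `P` whose reversal lies in `Q`. -/
def Disagree (P Q : PPref A) : Set (A × A) := {p | P.rel p.1 p.2 ∧ Q.rel p.2 p.1}

/-- Proxy Availability. -/
def PA (g : (N → PPref A) → N → Set N) : Prop :=
  ∀ (i : N) (Pi : PPref A), ∃ P : N → PPref A, P i = Pi ∧ g P i ≠ ∅

/-- Independence of Irrelevant Proxies. -/
def IIP (g : (N → PPref A) → N → Set N) : Prop :=
  ∀ (P P' : N → PPref A) (i j : N), P i = P' i → P j = P' j →
    (j ∈ g P i ↔ j ∈ g P' i)

/-- Preference Monotonicity. -/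
def PM (g : (N → PPref A) → N → Set N) : Prop :=
  ∀ (P : N → PPref A) (i j k : N), j ∈ g P i → j ≠ i → k ≠ i →
    Agree (P i) (P j) ⊆ Agree (P i) (P k) →
    Disagree (P i) (P k) ⊆ Disagree (P i) (P j) → k ∈ g P i

/-- The SUBSET proxy mechanism. -/
noncomputable def SUBSETg : (N → PPref A) → N → Set N := fun P i =>
  if (P i).isEmptyPref then {j | j ≠ i}
  else if (P i).isLinear then ({i} : Set N)
  else {j | j ≠ i ∧ (P i).subsetOf (P j)}

/-- The proxy actually chosen by voter `i`: herself if she votes directly (permitted set is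
`{i}` or empty), otherwise the `S i`-maximal permitted proxy. -/
noncomputable def proxyOf (g : (N → PPref A) → N → Set N) (P : N → PPref A)
    (S : N → LPref N) (i : N) : N :=
  if g P i = {i} ∨ g P i = ∅ then i
  else if h : ∃ j ∈ g P i, ∀ k ∈ g P i, k ≠ j → (S i).1.rel j k then h.choose else i

/-- The linear order cast on behalf of voter `i` by her guru: follow delegations
(`Fintype.card N` steps suffice); a terminal voter casts her own linear order if she has one,
otherwise her default; voters caught in cycles cast their defaults. -/
noncomputable def gurus [Fintype N] (g : (N → PPref A) → N → Set N)
    (P : N → PPref A) (S : N → LPref N) (D : N → LPref A) (i : N) : LPref A :=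
  let d := proxyOf g P S
  let t := d^[Fintype.card N] i
  if d t = t then (if h : (P t).isLinear then ⟨P t, h⟩ else D t) else D i

/-- Zero Regret: the vote cast by each voter's guru extends her submitted partial order. -/
def ZR [Fintype N] (g : (N → PPref A) → N → Set N) : Prop :=
  ∀ (P : N → PPref A) (S : N → LPref N) (D : N → LPref A),
    (∀ i, (P i).subsetOf (D i).1) → ∀ i, (P i).subsetOf (gurus g P S D i).1

end Defs

/-!
Fix distinct voters `i, j, k` and let `E = {a ≻ b}`, `V = {a ≻ b, c ≻ b}`. By IIP, whether a
voter is a permitted proxy of `i` depends only on the two reports, and by PM a voter reversing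
every comparison of `i` is the least acceptable one: if she is permitted, everybody is. Let `j`
report `b ≻ a ≻ c` and `k` report `b ≻ c ≻ a`; both reverse `V`, and `j` reverses `E`.
* If `j` is not permitted for `E`: with an empty report `i` delegates to `j`; after adding
  `a ≻ b` her permitted proxies and her default all report `c ≻ a ≻ b`.
* If `j` is permitted for `E` but `k` is not for `V`: then `k` is permitted for `E` and `i`
  delegates to her; after adding `c ≻ b` neither `j` nor `k` is permitted, and all others and
  the default report `a ≻ c ≻ b`.
* If `k` is permitted for `V`: reporting `c ≻ a ≻ b`, `i` votes directly; after deleting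
  `c ≻ a` she reports `V`, so `k` and hence `j` are permitted and she delegates to `j`.
Each case is the theorem up to relabelling the alternatives.
-/

open Function

namespace PPref

variable {A B : Type*}

def ofRank [Preorder B] (f : A → B) : PPref A where
  rel x y := f y < f x
  irrefl _ := lt_irrefl _
  antisymm _ _ := lt_asymm
  trans _ _ _ hxy hyz := hyz.trans hxy

@[simp]
lemma ofRank_rel [Preorder B] {f : A → B} {x y : A} : (ofRank f).rel x y ↔ f y < f x := Iff.rfl

lemma isLinear_ofRank [LinearOrder B] {f : A → B} (hf : Injective f) : (ofRank f).isLinear :=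
  fun _ _ hxy => (hf.ne hxy).lt_or_gt.symm

/-- Requiring `x ∉ D` makes this a partial order without assuming `U` and `D` disjoint. -/
def above (U D : Set A) : PPref A where
  rel x y := x ∈ U ∧ x ∉ D ∧ y ∈ D
  irrefl _ h := h.2.1 h.2.2
  antisymm _ _ h h' := h'.2.1 h.2.2
  trans _ _ _ h h' := (h'.2.1 h.2.2).elim

@[simp]
lemma above_rel {U D : Set A} {x y : A} : (above U D).rel x y ↔ x ∈ U ∧ x ∉ D ∧ y ∈ D :=
  Iff.rfl

lemma above_empty_isEmptyPref : (above ∅ ∅ : PPref A).isEmptyPref := fun _ _ h => h.1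

lemma not_isLinear_above {U D : Set A} {x w : A} (hxD : x ∉ D) (hw : w ∉ D)
    (hxw : x ≠ w) : ¬(above U D).isLinear := fun h =>
  (h x w hxw).elim (fun h => hw h.2.2) (fun h => hxD h.2.2)

/-- `x ≻ y ≻` everything else (higher rank is preferred in `ofRank`). -/
noncomputable def lin3 (x y : A) : PPref A :=
  ofRank fun u => if u = x then 2 else if u = y then 1 else (0 : ℕ)

@[simp]
lemma lin3_rel {x y u v : A} :
    (lin3 x y).rel u v ↔ (u = x ∧ v ≠ x) ∨ (u = y ∧ v ≠ x ∧ v ≠ y) := by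
  simp only [lin3, ofRank_rel]
  split_ifs <;> simp_all

lemma lin3_isLinear {x y z : A} (hA : ∀ u, u = x ∨ u = y ∨ u = z) : (lin3 x y).isLinear :=
  isLinear_ofRank fun u v huv => by
    rcases hA u with rfl | rfl | rfl <;> rcases hA v with rfl | rfl | rfl <;> grind

lemma lin3_rel_of_above_rel {U : Set A} {b z x y : A} (h : (above U {b}).rel x y) :
    (lin3 b z).rel y x := by
  obtain ⟨-, hx, rfl⟩ := h
  exact lin3_rel.2 (Or.inl ⟨rfl, hx⟩)

lemma above_subsetOf_lin3 {U : Set A} {b x y : A} (hU : U ⊆ {x, y}) (hbx : b ≠ x)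
    (hby : b ≠ y) : (above U {b}).subsetOf (lin3 x y) := by
  rintro u v ⟨hu, -, rfl⟩
  rcases hU hu with rfl | rfl <;> simp [hbx, hby]

lemma exists_forall_rel_of_isLinear [Finite A] {L : PPref A} (hL : L.isLinear) {G : Set A}
    (hG : G.Nonempty) : ∃ m ∈ G, ∀ w ∈ G, w ≠ m → L.rel m w := by
  have : IsTrans A L.rel := ⟨L.trans⟩
  have : Std.Irrefl L.rel := ⟨L.irrefl⟩
  obtain ⟨m, hm, hmin⟩ := (Finite.wellFounded_of_trans_of_irrefl L.rel).has_min G hG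
  exact ⟨m, hm, fun w hw hwm => (hL m w hwm.symm).resolve_right (hmin w hw)⟩

end PPref

namespace LPref

variable {A B : Type*}

def ofRank [LinearOrder B] (f : A → B) (hf : Injective f) : LPref A :=
  ⟨PPref.ofRank f, PPref.isLinear_ofRank hf⟩

noncomputable def withTop [Fintype A] (t : A) : LPref A :=
  ofRank (fun m => if m = t then Fintype.card A else (Fintype.equivFin A m : ℕ)) fun u v h => by
    simp only at h
    split_ifs at h with hu hv hv
    · exact hu.trans hv.symm
    · exact absurd h.symm (Fin.is_lt _).ne
    · exact absurd h (Fin.is_lt _).ne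
    · exact (Fintype.equivFin A).injective (Fin.ext h)

lemma withTop_rel [Fintype A] {t w : A} (hw : w ≠ t) : (withTop t).1.rel t w := by
  simp [withTop, ofRank, hw]

end LPref

section Delegation

variable {N A : Type*} {g : (N → PPref A) → N → Set N} {P : N → PPref A} {S : N → LPref N}
  {i t : N}

lemma proxyOf_eq_self_of_isLinear (hg : IsProxyMech g) (h : (P i).isLinear) :
    proxyOf g P S i = i := by
  simp [proxyOf, hg.2.1 P i h]

lemma proxyOf_eq_self_of_eq_empty (h : g P i = ∅) : proxyOf g P S i = i := by
  simp [proxyOf, h]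

lemma proxyOf_eq_of_forall_rel (ht : t ∈ g P i) (hti : t ≠ i)
    (htop : ∀ w, w ≠ t → (S i).1.rel t w) : proxyOf g P S i = t := by
  have hdel : ¬(g P i = {i} ∨ g P i = ∅) := by
    rintro (h | h) <;> simp [h, hti] at ht
  have hex : ∃ j ∈ g P i, ∀ k ∈ g P i, k ≠ j → (S i).1.rel j k :=
    ⟨t, ht, fun w _ => htop w⟩
  rw [proxyOf, if_neg hdel, dif_pos hex]
  by_contra hne
  exact (S i).1.antisymm _ _ (htop _ hne) (hex.choose_spec.2 t ht (Ne.symm hne))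

lemma proxyOf_mem [Finite N] (hi : i ∉ g P i) (hne : (g P i).Nonempty) :
    proxyOf g P S i ∈ g P i := by
  have hdel : ¬(g P i = {i} ∨ g P i = ∅) := by
    rintro (h | h)
    · exact hi (h ▸ rfl)
    · exact hne.ne_empty h
  have hex : ∃ j ∈ g P i, ∀ k ∈ g P i, k ≠ j → (S i).1.rel j k :=
    PPref.exists_forall_rel_of_isLinear (S i).2 hne
  rw [proxyOf, if_neg hdel, dif_pos hex]
  exact hex.choose_spec.1

variable [Fintype N] {D : N → LPref A}

lemma gurus_val_of_proxyOf_eq (hg : IsProxyMech g) (ht : proxyOf g P S i = t)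
    (hlin : (P t).isLinear) : (gurus g P S D i).1 = P t := by
  have htt : proxyOf g P S t = t := proxyOf_eq_self_of_isLinear hg hlin
  obtain ⟨n, hn⟩ := Nat.exists_eq_succ_of_ne_zero (@Fintype.card_pos _ _ ⟨i⟩).ne'
  have hiter : (proxyOf g P S)^[Fintype.card N] i = t := by
    rw [hn, iterate_succ_apply, ht, iterate_fixed htt]
  simp only [gurus]
  rw [hiter, if_pos htt]
  exact congrArg Subtype.val (dif_pos hlin)

lemma gurus_eq_default_of_proxyOf_eq_self (hii : proxyOf g P S i = i) (hnl : ¬(P i).isLinear) :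
    gurus g P S D i = D i := by
  simp only [gurus]
  rw [iterate_fixed hii, if_pos hii]
  exact dif_neg hnl

lemma gurus_val_of_mem_of_forall_rel (hg : IsProxyMech g) (ht : t ∈ g P i) (hti : t ≠ i)
    (htop : ∀ w, w ≠ t → (S i).1.rel t w) (hlin : (P t).isLinear) :
    (gurus g P S D i).1 = P t :=
  gurus_val_of_proxyOf_eq hg (proxyOf_eq_of_forall_rel ht hti htop) hlin

lemma gurus_eq_default_of_forall_mem (hg : IsProxyMech g) (hnl : ¬(P i).isLinear)
    (hD : ∀ m ∈ g P i, P m = (D i).1) : gurus g P S D i = D i := by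
  rcases (g P i).eq_empty_or_nonempty with h | h
  · exact gurus_eq_default_of_proxyOf_eq_self (proxyOf_eq_self_of_eq_empty h) hnl
  · have hm := proxyOf_mem (S := S) (hg.2.2 P i hnl) h
    exact Subtype.ext (by rw [gurus_val_of_proxyOf_eq hg rfl (hD _ hm ▸ (D i).2), hD _ hm])

end Delegation

section Axioms

variable {N A : Type*} {g : (N → PPref A) → N → Set N} {P : N → PPref A} {i j k : N}

lemma PM.mem_of_reverses (hPM : PM g) (hrev : ∀ x y, (P i).rel x y → (P j).rel y x)
    (hj : j ∈ g P i) (hji : j ≠ i) (hki : k ≠ i) : k ∈ g P i :=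
  hPM P i j k hj hji hki (fun _ hp => ((P j).antisymm _ _ hp.2 (hrev _ _ hp.1)).elim)
    fun _ hp => ⟨hp.1, hrev _ _ hp.1⟩

def Approves (g : (N → PPref A) → N → Set N) (i j : N) (Q R : PPref A) : Prop :=
  ∃ P : N → PPref A, P i = Q ∧ P j = R ∧ j ∈ g P i

lemma IIP.mem_of_approves (hIIP : IIP g) (h : Approves g i j (P i) (P j)) : j ∈ g P i :=
  let ⟨_, hi, hj, hm⟩ := h
  (hIIP _ _ i j hi.symm hj.symm).2 hm

end Axioms

section Switch

variable {N A : Type*} [DecidableEq N] {g : (N → PPref A) → N → Set N} {i m : N}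

def profile (L : N → LPref A) (i : N) (Q : PPref A) : N → PPref A :=
  update (fun m => (L m).1) i Q

variable {L : N → LPref A} {Q Q' : PPref A}

@[simp]
lemma profile_self : profile L i Q i = Q := update_self ..

@[simp]
lemma profile_of_ne (h : m ≠ i) : profile L i Q m = (L m).1 := update_of_ne h ..

lemma update_profile : update (profile L i Q) i Q' = profile L i Q' := update_idem ..

variable [Fintype N]

def SwitchAt (g : (N → PPref A) → N → Set N) (i : N) (a b c : A) : Prop :=
  a ≠ b ∧ a ≠ c ∧ b ≠ c ∧
  ∃ (P : N → PPref A) (Pi' : PPref A) (S : N → LPref N) (D : N → LPref A),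
    (∀ j, (P j).subsetOf (D j).1) ∧ Pi'.subsetOf (D i).1 ∧
    ((∀ x y, Pi'.rel x y ↔ ((P i).rel x y ∨ (x = a ∧ y = b))) ∨
     (∀ x y, Pi'.rel x y ↔ ((P i).rel x y ∧ ¬ (x = b ∧ y = a)))) ∧
    (gurus g P S D i).1.rel b a ∧ (gurus g P S D i).1.rel a c ∧
    (gurus g (Function.update P i Pi') S D i).1.rel c a ∧
    (gurus g (Function.update P i Pi') S D i).1.rel a b

lemma switchAt_of_gurus {a b c : A} (hab : a ≠ b) (hac : a ≠ c) (hbc : b ≠ c)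
    {S : N → LPref N} (hQ : Q.subsetOf (L i).1) (hQ' : Q'.subsetOf (L i).1)
    (hQQ' : (∀ x y, Q'.rel x y ↔ (Q.rel x y ∨ (x = a ∧ y = b))) ∨
      (∀ x y, Q'.rel x y ↔ (Q.rel x y ∧ ¬ (x = b ∧ y = a))))
    (hbefore : (gurus g (profile L i Q) S L i).1 = PPref.lin3 b a)
    (hafter : (gurus g (profile L i Q') S L i).1 = PPref.lin3 c a) : SwitchAt g i a b c := by
  refine ⟨hab, hac, hbc, profile L i Q, Q', S, L, fun m => ?_, hQ', by simpa using hQQ', ?_⟩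
  · by_cases hm : m = i
    · subst hm; simpa using hQ
    · rw [profile_of_ne hm]; exact fun _ _ => id
  · simp [update_profile, hbefore, hafter, hab, hac, hbc, hab.symm, hac.symm, hbc.symm]

end Switch

section Cases

open PPref

variable {N A : Type*} [DecidableEq N] [Fintype N] {g : (N → PPref A) → N → Set N}
  {a b c : A} {i j k : N}

lemma switchAt_of_not_approves_edge (hg : IsProxyMech g) (hab : a ≠ b) (hac : a ≠ c)
    (hbc : b ≠ c) (hA : ∀ u, u = a ∨ u = b ∨ u = c) (hji : j ≠ i)
    (hj : ¬Approves g i j (above {a} {b}) (lin3 b a)) : SwitchAt g i a b c := by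
  let bac : LPref A := ⟨lin3 b a, lin3_isLinear fun u => or_left_comm.1 (hA u)⟩
  let cab : LPref A := ⟨lin3 c a, lin3_isLinear fun u => (hA u).rotate.rotate⟩
  let L : N → LPref A := update (fun _ => cab) j bac
  have hL : ∀ m, m ≠ j → L m = cab := fun m hm => update_of_ne hm ..
  have hLj : L j = bac := update_self ..
  have hnl : ¬(above {a} {b}).isLinear :=
    not_isLinear_above (w := c) (by simp [hab]) (by simp [hbc.symm]) hac
  refine switchAt_of_gurus (L := L) (S := fun _ => LPref.withTop j) (Q := above ∅ ∅)
    (Q' := above {a} {b}) hab hac hbc (fun _ _ h => h.1.elim) ?_ (Or.inl ?_) ?_ ?_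
  · rw [hL i hji.symm]
    exact above_subsetOf_lin3 (by simp) hbc hab.symm
  · intro x y
    simp only [above_rel, Set.mem_singleton_iff]
    grind
  · have hjg : j ∈ g (profile L i (above ∅ ∅)) i := by
      rw [hg.1 _ i (by simpa using above_empty_isEmptyPref)]; exact hji
    rw [gurus_val_of_mem_of_forall_rel hg hjg hji (fun _ => LPref.withTop_rel)
      (by simpa [hji, hLj] using bac.2)]
    simp [hji, hLj, bac]
  · rw [gurus_eq_default_of_forall_mem hg (by simpa using hnl), hL i hji.symm]
    intro m hm
    have hmi : m ≠ i := fun h => hg.2.2 _ i (by simpa using hnl) (h ▸ hm)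
    have hmj : m ≠ j := by
      rintro rfl
      exact hj ⟨_, profile_self, by simp [hmi, hLj, bac], hm⟩
    rw [profile_of_ne hmi, hL m hmj, hL i hji.symm]

lemma switchAt_of_approves_edge_of_not_approves_vee (hg : IsProxyMech g) (hPM : PM g)
    (hIIP : IIP g) (hab : a ≠ b) (hac : a ≠ c) (hbc : b ≠ c)
    (hA : ∀ u, u = a ∨ u = b ∨ u = c) (hji : j ≠ i) (hki : k ≠ i) (hkj : k ≠ j)
    (hj : Approves g i j (above {a} {b}) (lin3 b a))
    (hk : ¬Approves g i k (above {a, c} {b}) (lin3 b c)) : SwitchAt g i c b a := by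
  let bac : LPref A := ⟨lin3 b a, lin3_isLinear fun u => or_left_comm.1 (hA u)⟩
  let bca : LPref A := ⟨lin3 b c, lin3_isLinear fun u => (hA u).rotate⟩
  let acb : LPref A := ⟨lin3 a c, lin3_isLinear fun u => (hA u).imp_right Or.symm⟩
  let L : N → LPref A := update (update (fun _ => acb) k bca) j bac
  have hL : ∀ m, m ≠ j → m ≠ k → L m = acb := fun m hmj hmk => by simp [L, hmj, hmk]
  have hLj : L j = bac := update_self ..
  have hLk : L k = bca := by simp [L, hkj]
  have hnl : ¬(above {a, c} {b}).isLinear :=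
    not_isLinear_above (w := c) (by simp [hab]) (by simp [hbc.symm]) hac
  refine switchAt_of_gurus (L := L) (S := fun _ => LPref.withTop k) (Q := above {a} {b})
    (Q' := above {a, c} {b}) hbc.symm hac.symm hab.symm ?_ ?_ (Or.inl ?_) ?_ ?_
  · rw [hL i hji.symm hki.symm]
    exact above_subsetOf_lin3 (by simp) hab.symm hbc
  · rw [hL i hji.symm hki.symm]
    exact above_subsetOf_lin3 (by simp) hab.symm hbc
  · intro x y
    simp only [above_rel, Set.mem_insert_iff, Set.mem_singleton_iff]
    grind
  · have hjg : j ∈ g (profile L i (above {a} {b})) i :=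
      hIIP.mem_of_approves (by simpa [hji, hLj] using hj)
    have hkg : k ∈ g (profile L i (above {a} {b})) i := by
      refine hPM.mem_of_reverses ?_ hjg hji hki
      rw [profile_self, profile_of_ne hji, hLj]
      exact fun _ _ => lin3_rel_of_above_rel
    rw [gurus_val_of_mem_of_forall_rel hg hkg hki (fun _ => LPref.withTop_rel)
      (by simpa [hki, hLk] using bca.2)]
    simp [hki, hLk, bca]
  · rw [gurus_eq_default_of_forall_mem hg (by simpa using hnl), hL i hji.symm hki.symm]
    intro m hm
    have hkg : k ∉ g (profile L i (above {a, c} {b})) i :=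
      fun h => hk ⟨_, profile_self, by simp [hki, hLk, bca], h⟩
    have hmi : m ≠ i := fun h => hg.2.2 _ i (by simpa using hnl) (h ▸ hm)
    have hmk : m ≠ k := by rintro rfl; exact hkg hm
    have hmj : m ≠ j := by
      rintro rfl
      refine hkg (hPM.mem_of_reverses ?_ hm hmi hki)
      rw [profile_self, profile_of_ne hmi, hLj]
      exact fun _ _ => lin3_rel_of_above_rel
    rw [profile_of_ne hmi, hL m hmj hmk, hL i hji.symm hki.symm]

lemma switchAt_of_approves_vee (hg : IsProxyMech g) (hPM : PM g) (hIIP : IIP g) (hab : a ≠ b)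
    (hac : a ≠ c) (hbc : b ≠ c) (hA : ∀ u, u = a ∨ u = b ∨ u = c)
    (hji : j ≠ i) (hki : k ≠ i) (hkj : k ≠ j)
    (hk : Approves g i k (above {a, c} {b}) (lin3 b c)) : SwitchAt g i a c b := by
  let bac : LPref A := ⟨lin3 b a, lin3_isLinear fun u => or_left_comm.1 (hA u)⟩
  let bca : LPref A := ⟨lin3 b c, lin3_isLinear fun u => (hA u).rotate⟩
  let cab : LPref A := ⟨lin3 c a, lin3_isLinear fun u => (hA u).rotate.rotate⟩
  let L : N → LPref A := update (update (fun _ => cab) k bca) j bac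
  have hLi : L i = cab := by simp [L, hji.symm, hki.symm]
  have hLj : L j = bac := update_self ..
  have hLk : L k = bca := by simp [L, hkj]
  refine switchAt_of_gurus (L := L) (S := fun _ => LPref.withTop j) (Q := lin3 c a)
    (Q' := above {a, c} {b}) hac hab hbc.symm (by rw [hLi]; exact fun _ _ => id) ?_ (Or.inr ?_)
    ?_ ?_
  · rw [hLi]
    exact above_subsetOf_lin3 (by simp [Set.pair_comm]) hbc hab.symm
  · intro x y
    simp only [above_rel, lin3_rel, Set.mem_insert_iff, Set.mem_singleton_iff]
    rcases hA x with rfl | rfl | rfl <;> rcases hA y with rfl | rfl | rfl <;> grind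
  · have hlin : (profile L i (lin3 c a) i).isLinear := by simpa using cab.2
    rw [gurus_val_of_proxyOf_eq hg (proxyOf_eq_self_of_isLinear hg hlin) hlin, profile_self]
  · have hkg : k ∈ g (profile L i (above {a, c} {b})) i :=
      hIIP.mem_of_approves (by simpa [hki, hLk] using hk)
    have hjg : j ∈ g (profile L i (above {a, c} {b})) i := by
      refine hPM.mem_of_reverses ?_ hkg hki hji
      rw [profile_self, profile_of_ne hki, hLk]
      exact fun _ _ => lin3_rel_of_above_rel
    rw [gurus_val_of_mem_of_forall_rel hg hjg hji (fun _ => LPref.withTop_rel)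
      (by simpa [hji, hLj] using bac.2)]
    simp [hji, hLj, bac]

end Cases

/-- With three alternatives and at least three voters, for any proxy mechanism satisfying
PM and IIP there are a voter `i`, alternatives `a, b, c`, and a proxy vote profile such
that adding the edge `a ≻ b` to (or deleting the edge `b ≻ a` from) `i`'s partial order
switches the vote cast by `i`'s guru from `b ≻ a ≻ c` to `c ≻ a ≻ b`. -/
theorem guru_switch_lemma {N A : Type*} [Fintype N] [DecidableEq N]
    (a₀ b₀ c₀ : A) (h₁ : a₀ ≠ b₀) (h₂ : a₀ ≠ c₀) (h₃ : b₀ ≠ c₀)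
    (hA : ∀ x : A, x = a₀ ∨ x = b₀ ∨ x = c₀)
    (hN : 3 ≤ Fintype.card N)
    (g : (N → PPref A) → N → Set N) (hg : IsProxyMech g)
    (hPM : PM g) (hIIP : IIP g) :
    ∃ (i : N) (a b c : A), a ≠ b ∧ a ≠ c ∧ b ≠ c ∧
      ∃ (P : N → PPref A) (Pi' : PPref A) (S : N → LPref N) (D : N → LPref A),
        (∀ j, (P j).subsetOf (D j).1) ∧ Pi'.subsetOf (D i).1 ∧
        ((∀ x y, Pi'.rel x y ↔ ((P i).rel x y ∨ (x = a ∧ y = b))) ∨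
         (∀ x y, Pi'.rel x y ↔ ((P i).rel x y ∧ ¬ (x = b ∧ y = a)))) ∧
        (gurus g P S D i).1.rel b a ∧ (gurus g P S D i).1.rel a c ∧
        (gurus g (Function.update P i Pi') S D i).1.rel c a ∧
        (gurus g (Function.update P i Pi') S D i).1.rel a b := by
  obtain ⟨i, j, k, hij, hik, hjk⟩ := Fintype.two_lt_card_iff.1 hN
  by_cases hk : Approves g i k (PPref.above {a₀, c₀} {b₀}) (PPref.lin3 b₀ c₀)
  · exact ⟨i, a₀, c₀, b₀,
      switchAt_of_approves_vee hg hPM hIIP h₁ h₂ h₃ hA hij.symm hik.symm hjk.symm hk⟩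
  by_cases hj : Approves g i j (PPref.above {a₀} {b₀}) (PPref.lin3 b₀ a₀)
  · exact ⟨i, c₀, b₀, a₀, switchAt_of_approves_edge_of_not_approves_vee hg hPM hIIP h₁ h₂ h₃
      hA hij.symm hik.symm hjk.symm hj hk⟩
  · exact ⟨i, a₀, b₀, c₀, switchAt_of_not_approves_edge hg h₁ h₂ h₃ hA hij.symm hj⟩
end

section
/- If f is IIA-manipulable over n voters and m alternatives and f is Uniform Voter Addition Invariant, then (f, SUBSET) is proxy-choice manipulable over n + m! voters and m alternatives. -/
open scoped Classical

section SCF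

variable {N : Type*} {A : Type*}

/-- Anonymity of a social choice function. -/
def Anonymous [Fintype N] (f : (N → LPref A) → A) : Prop :=
  ∀ (ψ : Equiv.Perm N) (L : N → LPref A), f (fun i => L (ψ i)) = f L

/-- Neutrality of a social choice function. -/
def Neutral (f : (N → LPref A) → A) : Prop :=
  ∀ (ψ : Equiv.Perm A) (L : N → LPref A), ψ (f L) = f (fun i => LPref.map ψ (L i))

/-- Proxy Vote Anonymity of a pair `(f, g)`: relabelling voters (in preferences, proxy
rankings — including the names occurring inside them — and defaults) leaves the outcome
unchanged. -/
def PVAnon [Fintype N] (f : (N → LPref A) → A) (g : (N → PPref A) → N → Set N) : Prop :=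
  ∀ (P : N → PPref A) (S : N → LPref N) (D : N → LPref A),
    (∀ i, (P i).subsetOf (D i).1) →
    ∀ ψ : Equiv.Perm N,
      f (gurus g P S D) =
        f (gurus g (fun i => P (ψ.symm i)) (fun i => LPref.map ψ (S (ψ.symm i)))
            (fun i => D (ψ.symm i)))

/-- Proxy Vote Neutrality of a pair `(f, g)`: relabelling alternatives renames the outcome. -/
def PVNeut [Fintype N] (f : (N → LPref A) → A) (g : (N → PPref A) → N → Set N) : Prop :=
  ∀ (P : N → PPref A) (S : N → LPref N) (D : N → LPref A),
    (∀ i, (P i).subsetOf (D i).1) →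
    ∀ ψ : Equiv.Perm A,
      ψ (f (gurus g P S D)) =
        f (gurus g (fun i => PPref.map ψ (P i)) S (fun i => LPref.map ψ (D i)))

/-- Proxy Vote Addition Monotonicity. -/
def PVAM [Fintype N] [DecidableEq N] (f : (N → LPref A) → A)
    (g : (N → PPref A) → N → Set N) : Prop :=
  ∀ (P : N → PPref A) (S : N → LPref N) (D : N → LPref A),
    (∀ j, (P j).subsetOf (D j).1) →
    ∀ (i : N) (a b : A) (Pi' : PPref A),
      f (gurus g P S D) = a →
      (∀ x y, Pi'.rel x y ↔ (P i).rel x y ∨ (x = a ∧ y = b)) →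
      Pi'.subsetOf (D i).1 →
      f (gurus g (Function.update P i Pi') S D) = a

/-- Proxy Vote Deletion Monotonicity. -/
def PVDM [Fintype N] [DecidableEq N] (f : (N → LPref A) → A)
    (g : (N → PPref A) → N → Set N) : Prop :=
  ∀ (P : N → PPref A) (S : N → LPref N) (D : N → LPref A),
    (∀ j, (P j).subsetOf (D j).1) →
    ∀ (i : N) (a b : A) (Pi' : PPref A),
      f (gurus g P S D) = a →
      (∀ x y, Pi'.rel x y ↔ (P i).rel x y ∧ ¬ (x = b ∧ y = a)) →
      f (gurus g (Function.update P i Pi') S D) = a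

/-- Weak monotonicity of a social choice function: moving the winner `a` up one place
(replacing `b ≻ a` by `a ≻ b` in one voter's ballot) preserves the winner. -/
def WeakMono [DecidableEq N] (f : (N → LPref A) → A) : Prop :=
  ∀ (L : N → LPref A) (i : N) (a b : A) (Li' : LPref A),
    f L = a →
    (∀ x y, Li'.1.rel x y ↔ (((L i).1.rel x y ∧ ¬ (x = b ∧ y = a)) ∨ (x = a ∧ y = b))) →
    f (Function.update L i Li') = a

end SCF

/-- Proxy-choice manipulability of a pair `(f, g)`: some voter `i` strictly prefers (per
her own partial order) the outcome obtained by changing only her proxy ranking. -/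
def PCManip {N A : Type*} [Fintype N] (f : (N → LPref A) → A)
    (g : (N → PPref A) → N → Set N) : Prop :=
  ∃ (P : N → PPref A) (S S' : N → LPref N) (D : N → LPref A) (i : N),
    (∀ j, j ≠ i → S' j = S j) ∧
    (P i).rel (f (gurus g P S' D)) (f (gurus g P S D))

/-- IIA-manipulability of `f`: some voter can reverse the social ranking of two
alternatives while maintaining her own ranking of them. -/
def IIAManip {N A : Type*} [DecidableEq N] (f : (N → LPref A) → A) : Prop :=
  ∃ (L : N → LPref A) (i : N) (Li' : LPref A), Li' ≠ L i ∧
    (L i).1.rel (f (Function.update L i Li')) (f L) ∧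
    Li'.1.rel (f (Function.update L i Li')) (f L)

/-!
Let voter `i` manipulate `f` at `L` by reporting `L'ᵢ`, moving the winner from `y = f L` to
`x = f (L'ᵢ, L₋ᵢ)` with `x ≻ y` in both `Lᵢ` and `L'ᵢ`. In the augmented electorate, give `i`
the single-edge partial order `x ≻ y` and let everybody else vote their linear order. Under
SUBSET, the added voters holding `Lᵢ` and `L'ᵢ` are both admissible proxies for `i`, so by
ranking one or the other on top she makes the electorate cast `(Lᵢ, L₋ᵢ)⁺` or `(L'ᵢ, L₋ᵢ)⁺`,
and uniform voter addition invariance turns these outcomes into `y` and `x`.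
-/

theorem PPref.ext {A : Type*} {P Q : PPref A} (h : ∀ a b, P.rel a b ↔ Q.rel a b) : P = Q := by
  obtain ⟨r, _⟩ := P
  obtain ⟨s, _⟩ := Q
  obtain rfl : r = s := funext₂ fun a b => propext (h a b)
  rfl

theorem PPref.ne_of_rel {A : Type*} (P : PPref A) {a b : A} (h : P.rel a b) : a ≠ b := by
  rintro rfl
  exact P.irrefl a h

theorem PPref.not_isEmptyPref_of_rel {A : Type*} (P : PPref A) {a b : A} (h : P.rel a b) :
    ¬ P.isEmptyPref :=
  fun hP => hP a b h

theorem PPref.exists_ne_of_not_isEmptyPref {A : Type*} {P : PPref A} (h : ¬ P.isEmptyPref) :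
    ∃ a b : A, a ≠ b := by
  simp only [PPref.isEmptyPref, not_forall, not_not] at h
  obtain ⟨a, b, hab⟩ := h
  exact ⟨a, b, P.ne_of_rel hab⟩

theorem PPref.not_isEmptyPref_of_isLinear {A : Type*} {P : PPref A} (hP : P.isLinear)
    {a b : A} (hab : a ≠ b) : ¬ P.isEmptyPref := by
  rcases hP a b hab with h | h
  exacts [P.not_isEmptyPref_of_rel h, P.not_isEmptyPref_of_rel h]

def edgePref {A : Type*} {x y : A} (hxy : x ≠ y) : PPref A where
  rel a b := a = x ∧ b = y
  irrefl _ h := hxy (h.1.symm.trans h.2)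
  antisymm _ _ h h' := hxy (h.1.symm.trans h'.2)
  trans _ _ _ h h' := ⟨h.1, h'.2⟩

theorem edgePref_subsetOf {A : Type*} {x y : A} (hxy : x ≠ y) {P : PPref A} (h : P.rel x y) :
    (edgePref hxy).subsetOf P := by
  rintro a b ⟨rfl, rfl⟩
  exact h

theorem edgePref_not_isEmptyPref {A : Type*} {x y : A} (hxy : x ≠ y) :
    ¬ (edgePref hxy).isEmptyPref :=
  (edgePref hxy).not_isEmptyPref_of_rel ⟨rfl, rfl⟩

theorem eq_or_eq_of_edgePref_isLinear {A : Type*} {x y : A} (hxy : x ≠ y)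
    (h : (edgePref hxy).isLinear) (z : A) : z = x ∨ z = y := by
  by_contra! hz
  rcases h z x hz.1 with h | h
  exacts [hz.1 h.1, hz.2 h.2]

/-- On a two-element type a linear order is determined by its top element. -/
theorem LPref.eq_of_rel_of_edgePref_isLinear {A : Type*} {x y : A} (hxy : x ≠ y)
    (h : (edgePref hxy).isLinear) {Q Q' : LPref A} (hQ : Q.1.rel x y) (hQ' : Q'.1.rel x y) :
    Q = Q' := by
  refine Subtype.ext (PPref.ext fun a b => ?_)
  rcases eq_or_eq_of_edgePref_isLinear hxy h a with rfl | rfl <;>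
    rcases eq_or_eq_of_edgePref_isLinear hxy h b with rfl | rfl
  · exact iff_of_false (Q.1.irrefl _) (Q'.1.irrefl _)
  · exact iff_of_true hQ hQ'
  · exact iff_of_false (Q.1.antisymm _ _ hQ) (Q'.1.antisymm _ _ hQ')
  · exact iff_of_false (Q.1.irrefl _) (Q'.1.irrefl _)

theorem edgePref_not_isLinear {A : Type*} {x y : A} (hxy : x ≠ y) {Q Q' : LPref A}
    (hne : Q ≠ Q') (hQ : Q.1.rel x y) (hQ' : Q'.1.rel x y) : ¬ (edgePref hxy).isLinear :=
  fun h => hne (LPref.eq_of_rel_of_edgePref_isLinear hxy h hQ hQ')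

noncomputable def topPref {B : Type*} (t : B) : LPref B where
  val :=
    { rel := fun a b => (a = t ∧ b ≠ t) ∨ (a ≠ t ∧ b ≠ t ∧ WellOrderingRel a b)
      irrefl := by
        rintro a (⟨h1, h2⟩ | ⟨-, -, h⟩)
        exacts [h2 h1, irrefl a h]
      antisymm := by
        rintro a b (⟨h1, h2⟩ | ⟨h1, h2, h⟩) (⟨h1', h2'⟩ | ⟨h1', h2', h'⟩)
        exacts [h2 h1', h2' h1, h2 h1', asymm h h']
      trans := by
        rintro a b c (⟨h1, h2⟩ | ⟨h1, h2, h⟩) (⟨h1', h2'⟩ | ⟨h1', h2', h'⟩)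
        exacts [absurd h1' h2, Or.inl ⟨h1, h2'⟩, absurd h1' h2,
          Or.inr ⟨h1, h2', _root_.trans h h'⟩] }
  property a b hab := by
    by_cases ha : a = t
    · exact Or.inl (Or.inl ⟨ha, ha ▸ hab.symm⟩)
    by_cases hb : b = t
    · exact Or.inr (Or.inl ⟨hb, ha⟩)
    rcases trichotomous_of WellOrderingRel a b with h | h | h
    exacts [Or.inl (Or.inr ⟨ha, hb, h⟩), absurd h hab, Or.inr (Or.inr ⟨hb, ha, h⟩)]

theorem topPref_rel {B : Type*} {t b : B} (hb : b ≠ t) : (topPref t).1.rel t b :=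
  Or.inl ⟨rfl, hb⟩

section Delegation

variable {N A : Type*}

theorem proxyOf_eq_self_of_eq_singleton {g : (N → PPref A) → N → Set N} {P : N → PPref A}
    (S : N → LPref N) {i : N} (h : g P i = {i}) : proxyOf g P S i = i := by
  simp only [proxyOf, if_pos (Or.inl h)]

theorem proxyOf_eq_of_isTop {g : (N → PPref A) → N → Set N} {P : N → PPref A}
    {S : N → LPref N} {i j : N} (hj : j ∈ g P i) (hji : j ≠ i)
    (htop : ∀ k, k ≠ j → (S i).1.rel j k) : proxyOf g P S i = j := by
  have hdeleg : ¬ (g P i = {i} ∨ g P i = ∅) := by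
    rintro (h | h) <;> rw [h] at hj
    exacts [hji hj, hj]
  have hmax : ∃ j ∈ g P i, ∀ k ∈ g P i, k ≠ j → (S i).1.rel j k :=
    ⟨j, hj, fun k _ hk => htop k hk⟩
  simp only [proxyOf, if_neg hdeleg, dif_pos hmax]
  obtain ⟨-, hmax'⟩ := hmax.choose_spec
  by_contra hne
  exact (S i).1.antisymm _ _ (hmax' j hj (Ne.symm hne)) (htop _ hne)

theorem gurus_eq_of_step [Fintype N] (g : (N → PPref A) → N → Set N) (P : N → PPref A)
    (S : N → LPref N) (D : N → LPref A) {i j : N}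
    (hij : proxyOf g P S i = j) (hj : proxyOf g P S j = j)
    (hlin : (P j).isLinear) : gurus g P S D i = ⟨P j, hlin⟩ := by
  obtain ⟨n, hn⟩ := Nat.exists_eq_succ_of_ne_zero (Fintype.card_pos_iff.2 ⟨i⟩).ne'
  have hguru : (proxyOf g P S)^[Fintype.card N] i = j := by
    rw [hn, Function.iterate_succ_apply, hij, Function.iterate_fixed hj]
  simp only [gurus, hguru, if_pos hj]
  exact dif_pos (hguru ▸ hlin)

theorem SUBSETg_eq_singleton_of_isLinear {P : N → PPref A} {i : N} (hP : (P i).isLinear)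
    {a b : A} (hab : a ≠ b) : SUBSETg P i = {i} := by
  simp only [SUBSETg, if_neg (PPref.not_isEmptyPref_of_isLinear hP hab), if_pos hP]

theorem SUBSETg_eq_of_not_isLinear {P : N → PPref A} {i : N} (hP : ¬ (P i).isEmptyPref)
    (hP' : ¬ (P i).isLinear) : SUBSETg P i = {j | j ≠ i ∧ (P i).subsetOf (P j)} := by
  simp only [SUBSETg, if_neg hP, if_neg hP']

theorem gurus_SUBSETg_eq_update [Fintype N] [DecidableEq N] {P : N → PPref A}
    {S : N → LPref N} (D : N → LPref A) {L : N → LPref A} {i j : N}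
    (hL : ∀ k, k ≠ i → P k = (L k).1) (hPi : ¬ (P i).isEmptyPref) (hPi' : ¬ (P i).isLinear)
    (hji : j ≠ i) (hsub : (P i).subsetOf (P j)) (htop : ∀ k, k ≠ j → (S i).1.rel j k) :
    gurus SUBSETg P S D = Function.update L i (L j) := by
  obtain ⟨a, b, hab⟩ := PPref.exists_ne_of_not_isEmptyPref hPi
  have hlin : ∀ k, k ≠ i → (P k).isLinear := fun k hk => hL k hk ▸ (L k).2
  have hself : ∀ k, k ≠ i → proxyOf SUBSETg P S k = k := fun k hk =>
    proxyOf_eq_self_of_eq_singleton S (SUBSETg_eq_singleton_of_isLinear (hlin k hk) hab)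
  have hj : j ∈ SUBSETg P i := by
    rw [SUBSETg_eq_of_not_isLinear hPi hPi']
    exact ⟨hji, hsub⟩
  funext k
  by_cases hk : k = i
  · subst hk
    rw [gurus_eq_of_step SUBSETg P S D (proxyOf_eq_of_isTop hj hji htop) (hself j hji)
      (hlin j hji), Function.update_self]
    exact Subtype.ext (hL j hji)
  · rw [gurus_eq_of_step SUBSETg P S D (hself k hk) (hself k hk) (hlin k hk),
      Function.update_of_ne hk]
    exact Subtype.ext (hL k hk)

end Delegation

theorem gurus_SUBSETg_augment {N M A : Type*} [Fintype N] [DecidableEq N] [Fintype M]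
    (e : M ≃ LPref A) (L : N → LPref A) (i : N) {Pi : PPref A} (hPi : ¬ Pi.isEmptyPref)
    (hPi' : ¬ Pi.isLinear) {Q : LPref A} (hQ : Pi.subsetOf Q.1) {S : N ⊕ M → LPref (N ⊕ M)}
    (hS : S (.inl i) = topPref (.inr (e.symm Q))) (D : N ⊕ M → LPref A) :
    gurus SUBSETg (Function.update (fun k => (Sum.elim L (fun m => e m) k).1) (.inl i) Pi) S D =
      Sum.elim (Function.update L i Q) (fun m => e m) := by
  rw [gurus_SUBSETg_eq_update D (L := Sum.elim L (fun m => e m)) (j := .inr (e.symm Q))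
    (fun k hk => Function.update_of_ne hk _ _) (by rwa [Function.update_self])
    (by rwa [Function.update_self]) Sum.inr_ne_inl
    (by simpa only [Function.update_self, Function.update_of_ne Sum.inr_ne_inl, Sum.elim_inr,
      Equiv.apply_symm_apply] using hQ)
    (fun k hk => hS ▸ topPref_rel hk)]
  simp only [Sum.elim_inr, Equiv.apply_symm_apply, Sum.elim_update_left]

theorem iiamanip_uvai_implies_pcmanip_general {N M A : Type*}
    [Fintype N] [DecidableEq N] [Fintype M]
    (e : M ≃ LPref A)
    (f : (N → LPref A) → A) (F : (N ⊕ M → LPref A) → A)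
    (hUVAI : ∀ L : N → LPref A, F (Sum.elim L fun m => e m) = f L)
    (hIIA : IIAManip f) :
    PCManip F (SUBSETg (N := N ⊕ M) (A := A)) := by
  obtain ⟨L, i, Li', hne, hxy, hxy'⟩ := hIIA
  have hxy_ne := (L i).1.ne_of_rel hxy
  have hPi := edgePref_not_isEmptyPref hxy_ne
  have hPi' := edgePref_not_isLinear hxy_ne (Ne.symm hne) hxy hxy'
  let S : N ⊕ M → LPref (N ⊕ M) := fun _ => topPref (.inr (e.symm (L i)))
  let S' := Function.update S (.inl i) (topPref (.inr (e.symm Li')))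
  let D : N ⊕ M → LPref A := fun _ => L i
  let P := Function.update (fun k => (Sum.elim L (fun m => e m) k).1) (.inl i) (edgePref hxy_ne)
  refine ⟨P, S, S', D, .inl i, fun k hk => Function.update_of_ne hk _ _, ?_⟩
  rw [gurus_SUBSETg_augment e L i hPi hPi' (edgePref_subsetOf hxy_ne hxy) (S := S) rfl,
    gurus_SUBSETg_augment e L i hPi hPi' (edgePref_subsetOf hxy_ne hxy') (S := S')
      (Function.update_self _ _ _), hUVAI, hUVAI, Function.update_eq_self]
  simp only [P, Function.update_self]
  exact ⟨rfl, rfl⟩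

/-- If `f` (on `n` voters) is IIA-manipulable and invariant under uniform voter addition —
where `F` is the rule on the electorate augmented by `m!` voters, one holding each linear
order over `A` (the extra voters indexed by a type `M` in bijection with the linear
orders) — then `(F, SUBSET)` is proxy-choice manipulable over `n + m!` voters. -/
theorem iiamanip_uvai_implies_pcmanip {N M A : Type*}
    [Fintype N] [DecidableEq N] [Fintype M] [DecidableEq M] [Fintype A]
    (e : M ≃ LPref A)
    (f : (N → LPref A) → A) (F : (N ⊕ M → LPref A) → A)
    (hUVAI : ∀ L : N → LPref A, F (Sum.elim L fun m => e m) = f L)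
    (hIIA : IIAManip f) :
    PCManip F (SUBSETg (N := N ⊕ M) (A := A)) :=
  iiamanip_uvai_implies_pcmanip_general e f F hUVAI hIIA
end
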